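/- (Bounded occurrences, chain case) Let $R, Q_1, \dots, Q_m$ be dyadic cubes with $Q_1 \subsetneq Q_2 \subsetneq \cdots \subsetneq Q_m$, and suppose there are integers $k_1 > k_2 > \cdots > k_m$ and a decreasing family of open sets $(\Omega_k)$ with Whitney decompositions $\mathcal{Q}_k$ (satisfying $Q^{(1)} \subseteq \Omega_k$ and $Q^{(2)} \cap \Omega_k^c \ne \emptyset$ for $Q \in \mathcal{Q}_k$) such that for each $l$: $Q_l \in \mathcal{Q}_{k_l}$ and $R \in \mathcal{Q}_{k_l + 3}$ with $R \subseteq Q_l^{(1)}$. Then $m \leq 6$. -/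

import Mathlib

open MeasureTheory Set

/-- The half-open dyadic cube of generation `k` (side length `2^(-k)`) at position `m`. -/
def dyadicCube (d : ℕ) (k : ℤ) (m : Fin d → ℤ) : Set (Fin d → ℝ) :=
  {x | ∀ i, (m i : ℝ) * 2 ^ (-k) ≤ x i ∧ x i < ((m i : ℝ) + 1) * 2 ^ (-k)}

/-- Index of the dyadic parent of the dyadic cube indexed by `(k, m)`. -/
def dyadicParentIdx (d : ℕ) : ℤ × (Fin d → ℤ) → ℤ × (Fin d → ℤ) :=
  fun p => (p.1 - 1, fun i => Int.fdiv (p.2 i) 2)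

/-- The dyadic cube corresponding to an index pair. -/
def cubeOf (d : ℕ) (p : ℤ × (Fin d → ℤ)) : Set (Fin d → ℝ) := dyadicCube d p.1 p.2

/-- The dyadic parent of the cube indexed by `p`. -/
def parentCubeOf (d : ℕ) (p : ℤ × (Fin d → ℤ)) : Set (Fin d → ℝ) :=
  cubeOf d (dyadicParentIdx d p)

/-- The dyadic grandparent of the cube indexed by `p`. -/
def grandparentCubeOf (d : ℕ) (p : ℤ × (Fin d → ℤ)) : Set (Fin d → ℝ) :=
  cubeOf d (dyadicParentIdx d (dyadicParentIdx d p))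

/-!
A point of `R` lies in both `R^{(2)}` and `Q_3^{(1)}`. As `Q_1 ⊊ Q_2 ⊊ Q_3` and `R ⊆ Q_1^{(1)}`,
the generation of `R^{(2)}` is at least that of `Q_3^{(1)}`, so by dyadic nesting
`R^{(2)} ⊆ Q_3^{(1)} ⊆ Ω_{k_3} ⊆ Ω_{k_6 + 3}`, against the Whitney condition of `R` at level
`k_6 + 3`. Dyadic cubes are handled through `x ∈ Q(k, m) ↔ ∀ i, ⌊2^k x_i⌋ = m_i`.
-/
lemma mem_cubeOf_iff {d : ℕ} {p : ℤ × (Fin d → ℤ)} {x : Fin d → ℝ} :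
    x ∈ cubeOf d p ↔ ∀ i, ⌊x i * 2 ^ p.1⌋ = p.2 i := by
  have h : (0 : ℝ) < 2 ^ p.1 := zpow_pos two_pos _
  simp only [cubeOf, dyadicCube, mem_ofPred_eq, Int.floor_eq_iff, zpow_neg, ← div_eq_mul_inv,
    div_le_iff₀ h, lt_div_iff₀ h]

theorem Int.floor_mul_two_zpow_of_le (r : ℝ) {k k' : ℤ} (h : k' ≤ k) :
    ⌊r * 2 ^ k'⌋ = ⌊r * 2 ^ k⌋ / 2 ^ (k - k').toNat := by
  have : r * 2 ^ k' = r * 2 ^ k / ((2 ^ (k - k').toNat : ℕ) : ℝ) := by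
    rw [Nat.cast_pow, Nat.cast_ofNat, ← zpow_natCast, Int.toNat_of_nonneg (by omega),
      mul_div_assoc, ← zpow_sub₀ two_ne_zero, sub_sub_cancel]
  rw [this, Int.floor_div_natCast]
  norm_cast

lemma corner_mem_cubeOf (d : ℕ) (p : ℤ × (Fin d → ℤ)) :
    (fun i => (p.2 i : ℝ) / 2 ^ p.1) ∈ cubeOf d p :=
  mem_cubeOf_iff.2 fun i => by rw [div_mul_cancel₀ _ (zpow_ne_zero _ two_ne_zero), Int.floor_intCast]

lemma cubeOf_nonempty (d : ℕ) (p : ℤ × (Fin d → ℤ)) : (cubeOf d p).Nonempty :=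
  ⟨_, corner_mem_cubeOf d p⟩

lemma cubeOf_subset_of_le {d : ℕ} {p q : ℤ × (Fin d → ℤ)} (h : q.1 ≤ p.1)
    (hpq : (cubeOf d p ∩ cubeOf d q).Nonempty) : cubeOf d p ⊆ cubeOf d q := by
  obtain ⟨x, hxp, hxq⟩ := hpq
  intro y hy
  rw [mem_cubeOf_iff] at hxp hxq hy ⊢
  intro i
  rw [Int.floor_mul_two_zpow_of_le _ h, hy, ← hxp, ← Int.floor_mul_two_zpow_of_le _ h, hxq]

lemma cubeOf_subset_parentCubeOf {d : ℕ} (p : ℤ × (Fin d → ℤ)) :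
    cubeOf d p ⊆ parentCubeOf d p := by
  intro x hx
  rw [mem_cubeOf_iff] at hx
  rw [parentCubeOf, mem_cubeOf_iff]
  intro i
  rw [dyadicParentIdx, Int.floor_mul_two_zpow_of_le _ (sub_le_self _ zero_le_one), hx]
  simp [Int.fdiv_eq_ediv_of_nonneg]

lemma cubeOf_subset_grandparentCubeOf {d : ℕ} (p : ℤ × (Fin d → ℤ)) :
    cubeOf d p ⊆ grandparentCubeOf d p :=
  (cubeOf_subset_parentCubeOf p).trans (cubeOf_subset_parentCubeOf _)

lemma lt_of_cubeOf_ssubset {d : ℕ} {p q : ℤ × (Fin d → ℤ)} (h : cubeOf d p ⊂ cubeOf d q) :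
    q.1 < p.1 := by
  by_contra! hle
  obtain ⟨x, hx⟩ := cubeOf_nonempty d p
  exact h.2 (cubeOf_subset_of_le hle ⟨x, h.1 hx, hx⟩)

lemma le_of_cubeOf_subset {d : ℕ} (hd : d ≠ 0) {p q : ℤ × (Fin d → ℤ)}
    (h : cubeOf d p ⊆ cubeOf d q) : q.1 ≤ p.1 := by
  by_contra! hlt
  let i : Fin d := ⟨0, Nat.pos_of_ne_zero hd⟩
  set x : Fin d → ℝ := fun j => p.2 j / 2 ^ p.1
  have hx : x ∈ cubeOf d p := corner_mem_cubeOf d p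
  have hx_int (j : Fin d) : x j * 2 ^ p.1 = p.2 j :=
    div_mul_cancel₀ _ (zpow_ne_zero _ two_ne_zero)
  -- `y` lies in the same cube of generation `p.1` as `x`, but in the next one of generation `q.1`
  set y : Fin d → ℝ := x + Pi.single i ((2 : ℝ) ^ q.1)⁻¹ with hy_def
  have hy : y ∈ cubeOf d p := mem_cubeOf_iff.2 fun j => by
    have hs : (Pi.single i ((2 : ℝ) ^ q.1)⁻¹ : Fin d → ℝ) j * (2 : ℝ) ^ p.1 ∈ Ico 0 1 := by
      rcases eq_or_ne j i with rfl | hj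
      · rw [Pi.single_eq_same, inv_mul_eq_div, mem_Ico, div_lt_one (zpow_pos two_pos _)]
        exact ⟨by positivity, zpow_lt_zpow_right₀ one_lt_two hlt⟩
      · simp [hj]
    rw [hy_def, Pi.add_apply, add_mul, hx_int, Int.floor_intCast_add,
      Int.floor_eq_zero_iff.2 hs, add_zero]
  have hshift : y i * 2 ^ q.1 = x i * 2 ^ q.1 + 1 := by
    rw [hy_def, Pi.add_apply, Pi.single_eq_same, add_mul,
      inv_mul_cancel₀ (zpow_ne_zero _ two_ne_zero)]
  have hyq := mem_cubeOf_iff.1 (h hy) i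
  rw [hshift, Int.floor_add_one, mem_cubeOf_iff.1 (h hx) i] at hyq
  omega

lemma grandparentCubeOf_subset_parentCubeOf {d : ℕ} (hd : d ≠ 0) {r p q : ℤ × (Fin d → ℤ)}
    (hrp : cubeOf d r ⊆ parentCubeOf d p) (hrq : cubeOf d r ⊆ parentCubeOf d q)
    (hpq : q.1 + 2 ≤ p.1) : grandparentCubeOf d r ⊆ parentCubeOf d q := by
  have hr : p.1 - 1 ≤ r.1 := le_of_cubeOf_subset hd hrp
  obtain ⟨x, hx⟩ := cubeOf_nonempty d r
  exact cubeOf_subset_of_le (by simp only [dyadicParentIdx]; omega)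
    ⟨x, cubeOf_subset_grandparentCubeOf r hx, hrq hx⟩

theorem bounded_occurrences_chain_general {d : ℕ} (Ω : ℤ → Set (Fin d → ℝ))
    (hdec : ∀ k, Ω (k + 1) ⊆ Ω k)
    (𝒬 : ℤ → Set (ℤ × (Fin d → ℤ)))
    (hparent : ∀ k, ∀ p ∈ 𝒬 k, parentCubeOf d p ⊆ Ω k)
    (hgrand : ∀ k, ∀ p ∈ 𝒬 k, (grandparentCubeOf d p ∩ (Ω k)ᶜ).Nonempty)
    (m : ℕ) (Rc : ℤ × (Fin d → ℤ)) (Q : Fin m → ℤ × (Fin d → ℤ)) (k : Fin m → ℤ)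
    (hchain : ∀ i j : Fin m, i < j → cubeOf d (Q i) ⊂ cubeOf d (Q j))
    (hk : ∀ i j : Fin m, i < j → k j < k i)
    (hQmem : ∀ l, Q l ∈ 𝒬 (k l))
    (hRmem : ∀ l, Rc ∈ 𝒬 (k l + 3))
    (hRsub : ∀ l, cubeOf d Rc ⊆ parentCubeOf d (Q l)) :
    m ≤ 6 := by
  by_contra! hm
  let e : Fin 7 → Fin m := Fin.castLE hm
  have he : StrictMono e := Fin.strictMono_castLE hm
  rcases eq_or_ne d 0 with rfl | hd
  · exact (hchain (e 0) (e 1) (he (by decide))).ne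
      ((cubeOf_nonempty _ _).eq_univ.trans (cubeOf_nonempty _ _).eq_univ.symm)
  have hgen : (Q (e 2)).1 + 2 ≤ (Q (e 0)).1 := by
    have h01 := lt_of_cubeOf_ssubset (hchain (e 0) (e 1) (he (by decide)))
    have h12 := lt_of_cubeOf_ssubset (hchain (e 1) (e 2) (he (by decide)))
    omega
  have hlevel : k (e 5) + 3 ≤ k (e 2) := by
    have h23 := hk (e 2) (e 3) (he (by decide))
    have h34 := hk (e 3) (e 4) (he (by decide))
    have h45 := hk (e 4) (e 5) (he (by decide))
    omega
  obtain ⟨z, hzR, hzΩ⟩ := hgrand _ Rc (hRmem (e 5))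
  exact hzΩ <| antitone_int_of_succ_le hdec hlevel <| hparent _ _ (hQmem (e 2)) <|
    grandparentCubeOf_subset_parentCubeOf hd (hRsub (e 0)) (hRsub (e 2)) hgen hzR

/-- bounded occurrences, chain case: if `R` is a Whitney cube at
levels `k_l + 3` for a strictly increasing chain of Whitney cubes
`Q_1 ⊊ ⋯ ⊊ Q_m` with `Q_l ∈ 𝒬_{k_l}`, `k_1 > ⋯ > k_m` and `R ⊆ Q_l^{(1)}`,
then `m ≤ 6`. -/
theorem bounded_occurrences_chain {d : ℕ} (Ω : ℤ → Set (Fin d → ℝ))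
    (hopen : ∀ k, IsOpen (Ω k)) (hproper : ∀ k, Ω k ≠ Set.univ)
    (hdec : ∀ k, Ω (k + 1) ⊆ Ω k)
    (𝒬 : ℤ → Set (ℤ × (Fin d → ℤ)))
    (hdisj : ∀ k, ∀ p ∈ 𝒬 k, ∀ p' ∈ 𝒬 k, p ≠ p' → Disjoint (cubeOf d p) (cubeOf d p'))
    (hunion : ∀ k, (⋃ p ∈ 𝒬 k, cubeOf d p) = Ω k)
    (hparent : ∀ k, ∀ p ∈ 𝒬 k, parentCubeOf d p ⊆ Ω k)
    (hgrand : ∀ k, ∀ p ∈ 𝒬 k, (grandparentCubeOf d p ∩ (Ω k)ᶜ).Nonempty)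
    (m : ℕ) (Rc : ℤ × (Fin d → ℤ)) (Q : Fin m → ℤ × (Fin d → ℤ)) (k : Fin m → ℤ)
    (hchain : ∀ i j : Fin m, i < j → cubeOf d (Q i) ⊂ cubeOf d (Q j))
    (hk : ∀ i j : Fin m, i < j → k j < k i)
    (hQmem : ∀ l, Q l ∈ 𝒬 (k l))
    (hRmem : ∀ l, Rc ∈ 𝒬 (k l + 3))
    (hRsub : ∀ l, cubeOf d Rc ⊆ parentCubeOf d (Q l)) :
    m ≤ 6 :=
  bounded_occurrences_chain_general Ω hdec 𝒬 hparent hgrand m Rc Q k hchain hk hQmem hRmem hRsub
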